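/- arXiv:2512.08053 — 11 statements merged into one kernel-verified Lean document; each statement's English description precedes it below -/
import Mathlib

section
/- There exists a 3-coloring of the edges of the complete graph K_4 such that every triangle (copy of K_3) contains all three colors; moreover, in every 3-coloring of the edges of K_5 there is a triangle whose edges use at most two colors. (Hence ξ(K_3) = 4.) -/
/-- ξ(K₃) = 4: there is a 3-edge-coloring of K₄ where every triangle gets all three
colors, and every 3-edge-coloring of K₅ has a triangle with at most two colors. -/
theorem xi_K3_eq_four :
    (∃ c : Fin 4 → Fin 4 → Fin 3, (∀ i j, c i j = c j i) ∧
      ∀ i j k : Fin 4, i ≠ j → j ≠ k → i ≠ k →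
        ({c i j, c j k, c i k} : Finset (Fin 3)) = Finset.univ) ∧
    (∀ c : Fin 5 → Fin 5 → Fin 3, (∀ i j, c i j = c j i) →
      ∃ i j k : Fin 5, i ≠ j ∧ j ≠ k ∧ i ≠ k ∧
        ({c i j, c j k, c i k} : Finset (Fin 3)).card ≤ 2) := by
  constructor
  · refine ⟨fun i j => if i.val ^^^ j.val = 1 then 0 else if i.val ^^^ j.val = 2 then 1 else 2,
      by decide, by decide⟩
  · intro c hsym
    have h : ∃ x y : Fin 4, x ≠ y ∧ c 0 x.succ = c 0 y.succ := by
      obtain ⟨x, y, hxy, h⟩ :=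
        Fintype.exists_ne_map_eq_of_card_lt (fun x : Fin 4 => c 0 x.succ) (by decide)
      exact ⟨x, y, hxy, h⟩
    obtain ⟨x, y, hxy, h⟩ := h
    refine ⟨0, x.succ, y.succ, (Fin.succ_ne_zero x).symm,
      fun hc => hxy (Fin.succ_injective _ hc), (Fin.succ_ne_zero y).symm, ?_⟩
    rw [← h]
    calc ({c 0 x.succ, c x.succ y.succ, c 0 x.succ} : Finset (Fin 3)).card
        = ({c 0 x.succ, c x.succ y.succ} : Finset (Fin 3)).card := by
          simp [Finset.insert_comm, Finset.pair_comm]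
      _ ≤ 2 := Finset.card_insert_le _ _ |>.trans (by simp)
end

section
/- For every n ≥ 3, the edge set of K_n admits a balanced 3-coloring: a coloring with colors {red, blue, green} such that for every vertex v and any two colors c1, c2, the number of edges of color c1 incident to v and the number of edges of color c2 incident to v differ by at most 1. -/
/-! Auxiliary construction: a balanced 3-edge-coloring built by induction,
adding three vertices at a time. -/

def tri (a b : ℕ) : Fin 3 := ⟨(2 * (a + b) + 1) % 3, by omega⟩

def extend3 (n : ℕ) (c : ℕ → ℕ → Fin 3) : ℕ → ℕ → Fin 3 := fun u v =>
  if u < n then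
    if v < n then c u v else ⟨(u + 1 + (v - n)) % 3, by omega⟩
  else
    if v < n then ⟨(v + 1 + (u - n)) % 3, by omega⟩ else tri (u - n) (v - n)

def Bal (n : ℕ) (c : ℕ → ℕ → Fin 3) : Prop :=
  (∀ i j, c i j = c j i) ∧
  ∀ v < n, ∀ k1 k2 : Fin 3,
    (((Finset.range n).filter fun u => u ≠ v ∧ c v u = k1).card : ℤ) -
      (((Finset.range n).filter fun u => u ≠ v ∧ c v u = k2).card : ℤ) ≤ 1

lemma card_filter_insert' {α : Type*} [DecidableEq α] (p : α → Prop) [DecidablePred p]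
    (a : α) (s : Finset α) (h : a ∉ s) :
    (Finset.filter p (insert a s)).card =
      (Finset.filter p s).card + if p a then 1 else 0 := by
  rw [Finset.filter_insert]
  split_ifs with hp
  · rw [Finset.card_insert_of_notMem (fun hm => h (Finset.mem_of_mem_filter a hm))]
  · rfl

lemma cnt (s k : ℕ) (hk : k < 3) (n : ℕ) :
    (((Finset.range n).filter fun u => (u + s) % 3 = k).card)
      = (n + 2 - ((k + 3 - s % 3) % 3)) / 3 := by
  induction n with
  | zero => simp; omega
  | succ m ih =>
    rw [Finset.range_add_one, card_filter_insert' _ _ _ (by simp), ih]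
    split_ifs with h <;> omega

lemma bal3 : Bal 3 tri := by
  constructor
  · intro i j
    simp only [tri, Fin.mk.injEq]
    omega
  · intro v hv
    interval_cases v <;> decide

def l4 : ℕ → ℕ → Fin 3
  | 0, 1 => 0 | 2, 3 => 0
  | 0, 2 => 1 | 1, 3 => 1
  | 0, 3 => 2 | 1, 2 => 2
  | _, _ => 0

def c4 (i j : ℕ) : Fin 3 := l4 (min i j) (max i j)

lemma bal4 : Bal 4 c4 := by
  constructor
  · intro i j
    unfold c4
    rw [Nat.min_comm, Nat.max_comm]
  · intro v hv
    interval_cases v <;> decide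

def l5 : ℕ → ℕ → Fin 3
  | 0, 1 => 0 | 1, 2 => 0 | 3, 4 => 0 | 0, 4 => 0
  | 0, 2 => 1 | 1, 3 => 1 | 2, 4 => 1
  | 0, 3 => 2 | 1, 4 => 2 | 2, 3 => 2
  | _, _ => 0

def c5 (i j : ℕ) : Fin 3 := l5 (min i j) (max i j)

lemma bal5 : Bal 5 c5 := by
  constructor
  · intro i j
    unfold c5
    rw [Nat.min_comm, Nat.max_comm]
  · intro v hv
    interval_cases v <;> decide

lemma step {n : ℕ} {c : ℕ → ℕ → Fin 3} (hc : Bal n c) : Bal (n + 3) (extend3 n c) := by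
  obtain ⟨hsym, hbal⟩ := hc
  constructor
  · intro i j
    by_cases hi : i < n <;> by_cases hj : j < n <;>
      simp only [extend3, hi, hj, if_true, if_false, ite_true, ite_false] <;>
      first
        | exact hsym i j
        | rfl
        | (simp only [tri, Fin.mk.injEq]; omega)
  · intro v hv k1 k2
    have expand : ∀ k : Fin 3,
        ((Finset.range (n+3)).filter fun u => u ≠ v ∧ extend3 n c v u = k).card
        = ((Finset.range n).filter fun u => u ≠ v ∧ extend3 n c v u = k).card
          + ((if (n ≠ v ∧ extend3 n c v n = k) then 1 else 0)
          + ((if (n+1 ≠ v ∧ extend3 n c v (n+1) = k) then 1 else 0)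
          + (if (n+2 ≠ v ∧ extend3 n c v (n+2) = k) then 1 else 0))) := by
      intro k
      have hr : Finset.range (n+3) = insert (n+2) (insert (n+1) (insert n (Finset.range n))) := by
        rw [show n+3 = (n+2)+1 from rfl, Finset.range_add_one,
            show n+2 = (n+1)+1 from rfl, Finset.range_add_one, Finset.range_add_one]
      rw [hr, card_filter_insert' _ _ _ (by simp only [Finset.mem_insert, Finset.mem_range]; omega),
          card_filter_insert' _ _ _ (by simp),
          card_filter_insert' _ _ _ (by simp)]
      ring
    rw [expand k1, expand k2]
    rcases Nat.lt_or_ge v n with hvn | hvn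
    · -- old vertex: each color gains exactly one new edge
      have hold : ∀ k : Fin 3,
          ((Finset.range n).filter fun u => u ≠ v ∧ extend3 n c v u = k)
          = ((Finset.range n).filter fun u => u ≠ v ∧ c v u = k) := by
        intro k
        apply Finset.filter_congr
        intro u hu
        simp only [Finset.mem_range] at hu
        simp [extend3, hu, hvn]
      have hsum : ∀ k : Fin 3,
          ((if (n ≠ v ∧ extend3 n c v n = k) then 1 else 0)
          + ((if (n+1 ≠ v ∧ extend3 n c v (n+1) = k) then 1 else 0)
          + (if (n+2 ≠ v ∧ extend3 n c v (n+2) = k) then 1 else 0))) = 1 := by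
        intro k
        obtain ⟨k, hk⟩ := k
        simp only [extend3, hvn, if_true,
          show ¬ n < n from by omega, show ¬ n+1 < n from by omega,
          show ¬ n+2 < n from by omega, if_false,
          show n ≠ v from by omega, show n+1 ≠ v from by omega,
          show n+2 ≠ v from by omega, true_and, Fin.mk.injEq, Nat.sub_self,
          Nat.add_sub_cancel_left, ite_true, ite_false]
        split_ifs <;> omega
      rw [hold k1, hold k2, hsum k1, hsum k2]
      have hb := hbal v hvn k1 k2
      push_cast
      omega
    · -- new vertex
      obtain ⟨a, rfl⟩ : ∃ a, v = n + a := ⟨v - n, by omega⟩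
      have ha : a < 3 := by omega
      have hold : ∀ k : Fin 3,
          (((Finset.range n).filter fun u => u ≠ n + a ∧ extend3 n c (n+a) u = k).card)
          = (n + 2 - ((k.val + 3 - (1 + a) % 3) % 3)) / 3 := by
        intro k
        rw [← cnt (1+a) k.val k.isLt n]
        apply congrArg Finset.card
        apply Finset.filter_congr
        intro u hu
        simp only [Finset.mem_range] at hu
        simp only [extend3, hu, if_true, show ¬ n + a < n from by omega, if_false,
          ite_true, ite_false, Fin.ext_iff]
        constructor
        · rintro ⟨-, h⟩; omega
        · intro h; exact ⟨by omega, by omega⟩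
      have et : ∀ b : ℕ, extend3 n c (n + a) (n + b) = tri a b := by
        intro b
        simp [extend3, show ¬ n + a < n from by omega, show ¬ n + b < n from by omega,
          Nat.add_sub_cancel_left]
      have et0 : extend3 n c (n + a) n = tri a 0 := by
        have := et 0
        simpa using this
      rw [hold k1, hold k2, et0, et 1, et 2]
      interval_cases a <;> fin_cases k1 <;> fin_cases k2 <;>
        simp only [tri, Fin.mk.injEq, Fin.ext_iff, Fin.val] <;>
        norm_num <;> omega

lemma balN (n : ℕ) (hn : 3 ≤ n) : ∃ c, Bal n c := by
  obtain ⟨r, t, hr, rfl⟩ : ∃ r t, r < 3 ∧ n = 3 + r + 3 * t :=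
    ⟨(n - 3) % 3, (n - 3) / 3, by omega, by omega⟩
  clear hn
  induction t with
  | zero =>
    interval_cases r
    · exact ⟨_, bal3⟩
    · exact ⟨_, bal4⟩
    · exact ⟨_, bal5⟩
  | succ m ih =>
    obtain ⟨c, hc⟩ := ih
    refine ⟨extend3 (3 + r + 3 * m) c, ?_⟩
    rw [show 3 + r + 3 * (m + 1) = (3 + r + 3 * m) + 3 from by ring]
    exact step hc

/-- For every n ≥ 3 the complete graph Kₙ admits a balanced 3-edge-coloring:
at every vertex, the numbers of incident edges of any two colors differ by at most 1. -/
theorem balanced_three_coloring_exists (n : ℕ) (hn : 3 ≤ n) :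
    ∃ c : Fin n → Fin n → Fin 3, (∀ i j, c i j = c j i) ∧
      ∀ v : Fin n, ∀ c1 c2 : Fin 3,
        ((Finset.univ.filter fun u => u ≠ v ∧ c v u = c1).card : ℤ) -
          ((Finset.univ.filter fun u => u ≠ v ∧ c v u = c2).card : ℤ) ≤ 1 := by
  obtain ⟨c, hsym, hbal⟩ := balN n hn
  refine ⟨fun i j => c i.val j.val, fun i j => hsym i.val j.val, ?_⟩
  intro v c1 c2
  have key : ∀ k : Fin 3,
      ((Finset.univ.filter fun u : Fin n => u ≠ v ∧ c v.val u.val = k).card)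
      = (((Finset.range n).filter fun u => u ≠ v.val ∧ c v.val u = k).card) := by
    intro k
    apply Finset.card_bij (fun (a : Fin n) _ => a.val)
    · intro a ha
      simp only [Finset.mem_filter, Finset.mem_univ, true_and] at ha
      simp only [Finset.mem_filter, Finset.mem_range]
      exact ⟨a.isLt, fun h => ha.1 (Fin.ext h), ha.2⟩
    · intro a _ b _ h
      exact Fin.ext h
    · intro b hb
      simp only [Finset.mem_filter, Finset.mem_range] at hb
      refine ⟨⟨b, hb.1⟩, ?_, rfl⟩
      simp only [Finset.mem_filter, Finset.mem_univ, true_and]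
      exact ⟨fun h => hb.2.1 (congrArg Fin.val h), hb.2.2⟩
  rw [key c1, key c2]
  exact hbal v.val v.isLt c1 c2
end

section
/- For every t ≥ 3, ξ(K_{1,t}) = ⌊(3t−1)/2⌋; that is, there is a 3-edge-coloring of the complete graph on ⌊(3t−1)/2⌋ vertices in which every star with t edges uses all three colors, while every 3-edge-coloring of the complete graph on ⌊(3t−1)/2⌋ + 1 vertices contains a star with t edges using at most two colors. -/
open Finset

lemma cnt3 (r : ℕ) (hr : r < 3) (m : ℕ) :
    ((Finset.range m).filter (fun k => k % 3 = r)).card = (m + 2 - r) / 3 := by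
  induction m with
  | zero => simp; omega
  | succ m ih =>
    rw [Finset.range_add_one, Finset.filter_insert]
    by_cases h : m % 3 = r
    · rw [if_pos h, Finset.card_insert_of_notMem (by simp)]
      omega
    · rw [if_neg h]
      omega

def stepColor (c : ℕ → ℕ → Fin 3) (m : ℕ) (i j : ℕ) : Fin 3 :=
  if i < m then
    (if j < m then c i j else ⟨(i + 2 * (j - m)) % 3, by omega⟩)
  else if j < m then ⟨(j + 2 * (i - m)) % 3, by omega⟩
  else ⟨(i + j - m - 1) % 3, by omega⟩

lemma exists_good : ∀ n : ℕ, ∃ c : ℕ → ℕ → Fin 3,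
    (∀ i j, c i j = c j i) ∧
    ∀ v < n, ∀ col : Fin 3,
      (n - 1) / 3 ≤ ((Finset.range n).filter (fun u => u ≠ v ∧ c v u = col)).card := by
  intro n
  induction n using Nat.strong_induction_on with
  | _ n ih =>
  rcases lt_or_ge n 4 with h | h
  · refine ⟨fun _ _ => 0, fun _ _ => rfl, fun v hv col => ?_⟩
    have : (n - 1) / 3 = 0 := by omega
    simp [this]
  · obtain ⟨m, rfl⟩ : ∃ m, n = m + 3 := ⟨n - 3, by omega⟩
    obtain ⟨c, hsym, hdeg⟩ := ih m (by omega)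
    refine ⟨stepColor c m, ?_, ?_⟩
    · intro i j
      unfold stepColor
      split_ifs <;> first | rfl | exact hsym i j | (apply Fin.ext; simp; omega)
    · intro v hv col
      by_cases hvm : v < m
      · -- old vertex
        have h1 : (Finset.range m).filter (fun u => u ≠ v ∧ stepColor c m v u = col)
            = (Finset.range m).filter (fun u => u ≠ v ∧ c v u = col) := by
          apply Finset.filter_congr
          intro u hu
          simp only [Finset.mem_range] at hu
          simp [stepColor, hvm, hu]
        set a := (2 * (col.val + 3 - v % 3)) % 3 with ha
        set w := m + a with hw
        have hwm : ¬ w < m := by omega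
        have hwcol : stepColor c m v w = col := by
          apply Fin.ext
          simp only [stepColor, hvm, hwm, if_pos, if_neg, if_true, if_false]
          have := col.isLt
          omega
        have hsub : insert w ((Finset.range m).filter (fun u => u ≠ v ∧ stepColor c m v u = col))
            ⊆ (Finset.range (m + 3)).filter (fun u => u ≠ v ∧ stepColor c m v u = col) := by
          intro x hx
          rcases Finset.mem_insert.mp hx with rfl | hx
          · exact Finset.mem_filter.mpr ⟨Finset.mem_range.mpr (by omega), by omega, hwcol⟩
          · exact Finset.filter_subset_filter _ (Finset.range_subset_range.mpr (by omega)) hx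
        have hnotmem : w ∉ (Finset.range m).filter (fun u => u ≠ v ∧ stepColor c m v u = col) := by
          intro hmem
          exact hwm (Finset.mem_range.mp (Finset.mem_filter.mp hmem).1)
        have hcard := Finset.card_le_card hsub
        rw [Finset.card_insert_of_notMem hnotmem, h1] at hcard
        have hd := hdeg v hvm col
        omega
      · -- new vertex
        have hvge : m ≤ v := le_of_not_gt hvm
        set r := (col.val + 6 - 2 * (v - m)) % 3 with hr
        have hold : (Finset.range m).filter (fun u => u ≠ v ∧ stepColor c m v u = col)
            = (Finset.range m).filter (fun u => u % 3 = r) := by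
          apply Finset.filter_congr
          intro u hu
          simp only [Finset.mem_range] at hu
          have hucol : stepColor c m v u = ⟨(u + 2 * (v - m)) % 3, by omega⟩ := by
            simp [stepColor, hvm, hu]
          simp only [hucol, Fin.ext_iff]
          have := col.isLt
          constructor
          · rintro ⟨-, h2⟩; omega
          · intro h2; exact ⟨by omega, by omega⟩
        have hcard_old := cnt3 r (by omega) m
        by_cases h3 : r = (m + 2) % 3
        · have hsub : (Finset.range m).filter (fun u => u ≠ v ∧ stepColor c m v u = col)
              ⊆ (Finset.range (m + 3)).filter (fun u => u ≠ v ∧ stepColor c m v u = col) :=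
            Finset.filter_subset_filter _ (Finset.range_subset_range.mpr (by omega))
          have hcard := Finset.card_le_card hsub
          rw [hold, hcard_old] at hcard
          omega
        · set a := (col.val + m + 1 + 2 * (m + 3) - v) % 3 with haa
          set w := m + a with hw
          have hwm : ¬ w < m := by omega
          have hwne : w ≠ v := by
            intro hwv
            apply h3
            have := col.isLt
            omega
          have hwcol : stepColor c m v w = col := by
            apply Fin.ext
            simp only [stepColor, hvm, hwm, if_neg, if_false]
            have := col.isLt
            omega
          have hsub : insert w ((Finset.range m).filter (fun u => u ≠ v ∧ stepColor c m v u = col))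
              ⊆ (Finset.range (m + 3)).filter (fun u => u ≠ v ∧ stepColor c m v u = col) := by
            intro x hx
            rcases Finset.mem_insert.mp hx with rfl | hx
            · exact Finset.mem_filter.mpr ⟨Finset.mem_range.mpr (by omega), hwne, hwcol⟩
            · exact Finset.filter_subset_filter _ (Finset.range_subset_range.mpr (by omega)) hx
          have hnotmem : w ∉ (Finset.range m).filter (fun u => u ≠ v ∧ stepColor c m v u = col) := by
            intro hmem
            exact hwm (Finset.mem_range.mp (Finset.mem_filter.mp hmem).1)
          have hcard := Finset.card_le_card hsub
          rw [Finset.card_insert_of_notMem hnotmem, hold, hcard_old] at hcard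
          have : r < 3 := by omega
          omega


lemma fin_transfer (n : ℕ) (P : ℕ → Prop) [DecidablePred P] :
    ((Finset.range n).filter P).card
      = (Finset.univ.filter (fun u : Fin n => P u.val)).card := by
  refine Finset.card_bij (fun k hk => ⟨k, Finset.mem_range.mp (Finset.mem_filter.mp hk).1⟩) ?_ ?_ ?_
  · intro a ha
    exact Finset.mem_filter.mpr ⟨Finset.mem_univ _, (Finset.mem_filter.mp ha).2⟩
  · intro a ha b hb h
    exact congrArg Fin.val h
  · intro b hb
    exact ⟨b.val, Finset.mem_filter.mpr ⟨Finset.mem_range.mpr b.isLt, (Finset.mem_filter.mp hb).2⟩, rfl⟩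



/-- ξ(K_{1,t}) = ⌊(3t−1)/2⌋ for t ≥ 3: on ⌊(3t−1)/2⌋ vertices some 3-edge-coloring makes
every star with t edges use all three colors, while on one more vertex every
3-edge-coloring contains a star with t edges using at most two colors. -/
theorem xi_star_eq (t : ℕ) (ht : 3 ≤ t) :
    (∃ c : Fin ((3 * t - 1) / 2) → Fin ((3 * t - 1) / 2) → Fin 3,
      (∀ i j, c i j = c j i) ∧
      ∀ (v : Fin ((3 * t - 1) / 2)) (L : Finset (Fin ((3 * t - 1) / 2))),
        v ∉ L → L.card = t → ∀ col : Fin 3, ∃ u ∈ L, c v u = col) ∧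
    (∀ c : Fin ((3 * t - 1) / 2 + 1) → Fin ((3 * t - 1) / 2 + 1) → Fin 3,
      (∀ i j, c i j = c j i) →
      ∃ (v : Fin ((3 * t - 1) / 2 + 1)) (L : Finset (Fin ((3 * t - 1) / 2 + 1))),
        v ∉ L ∧ L.card = t ∧ (L.image (c v)).card ≤ 2) := by
  set n := (3 * t - 1) / 2 with hn
  have hnt : 4 ≤ n ∧ n - t ≤ (n - 1) / 3 ∧ t ≤ n ∧ 3 * t - 3 < 2 * n := by omega
  constructor
  · -- lower bound: good coloring on n vertices
    obtain ⟨c, hsym, hdeg⟩ := exists_good n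
    refine ⟨fun i j => c i.val j.val, fun i j => hsym _ _, ?_⟩
    intro v L hvL hL col
    by_contra hcon
    push_neg at hcon
    set A := Finset.univ.filter (fun u : Fin n => u.val ≠ v.val ∧ c v.val u.val = col) with hA
    have hAcard : (n - 1) / 3 ≤ A.card := by
      rw [hA, ← fin_transfer n (fun u => u ≠ v.val ∧ c v.val u = col)]
      exact hdeg v.val v.isLt col
    have hdisj : Disjoint L A := by
      rw [Finset.disjoint_left]
      intro u huL huA
      exact hcon u huL ((Finset.mem_filter.mp huA).2.2)
    have hsub : L ∪ A ⊆ Finset.univ.erase v := by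
      intro x hx
      rcases Finset.mem_union.mp hx with hx | hx
      · exact Finset.mem_erase.mpr ⟨fun h => hvL (h ▸ hx), Finset.mem_univ _⟩
      · refine Finset.mem_erase.mpr ⟨?_, Finset.mem_univ _⟩
        intro h
        exact (Finset.mem_filter.mp hx).2.1 (congrArg Fin.val h)
    have hcard := Finset.card_le_card hsub
    rw [Finset.card_union_of_disjoint hdisj, Finset.card_erase_of_mem (Finset.mem_univ v),
      Finset.card_univ, Fintype.card_fin] at hcard
    omega
  · -- upper bound
    intro c hsymc
    have hv0 : 0 < n + 1 := by omega
    set v : Fin (n + 1) := ⟨0, hv0⟩ with hv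
    set A : Fin 3 → Finset (Fin (n + 1)) :=
      fun col => Finset.univ.filter (fun u => u ≠ v ∧ c v u = col) with hA
    have hdisj : ∀ col col' : Fin 3, col ≠ col' → Disjoint (A col) (A col') := by
      intro col col' hne
      rw [Finset.disjoint_left]
      intro u hu hu'
      exact hne (((Finset.mem_filter.mp hu).2.2).symm.trans (Finset.mem_filter.mp hu').2.2)
    have hsub : A 0 ∪ A 1 ∪ A 2 ⊆ Finset.univ.erase v := by
      intro x hx
      have hxv : x ≠ v := by
        rcases Finset.mem_union.mp hx with hx | hx
        · rcases Finset.mem_union.mp hx with hx | hx <;>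
            exact (Finset.mem_filter.mp hx).2.1
        · exact (Finset.mem_filter.mp hx).2.1
      exact Finset.mem_erase.mpr ⟨hxv, Finset.mem_univ _⟩
    have hsum : (A 0).card + (A 1).card + (A 2).card ≤ n := by
      have h1 := Finset.card_le_card hsub
      rw [Finset.card_union_of_disjoint, Finset.card_union_of_disjoint (hdisj 0 1 (by decide)),
        Finset.card_erase_of_mem (Finset.mem_univ v), Finset.card_univ, Fintype.card_fin] at h1
      · omega
      · rw [Finset.disjoint_union_left]
        exact ⟨hdisj 0 2 (by decide), hdisj 1 2 (by decide)⟩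
    have hex : ∃ col : Fin 3, (A col).card ≤ n - t := by
      by_contra hc
      push_neg at hc
      have h0 := hc 0
      have h1 := hc 1
      have h2 := hc 2
      omega
    obtain ⟨col, hcol⟩ := hex
    set B := Finset.univ.filter (fun u : Fin (n + 1) => u ≠ v ∧ c v u ≠ col) with hB
    have hunion : A col ∪ B = Finset.univ.erase v := by
      ext u
      simp only [hA, hB, Finset.mem_union, Finset.mem_filter, Finset.mem_erase,
        Finset.mem_univ, true_and, and_true]
      tauto
    have hdisjAB : Disjoint (A col) B := by
      rw [Finset.disjoint_left]
      intro u hu hu'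
      exact (Finset.mem_filter.mp hu').2.2 (Finset.mem_filter.mp hu).2.2
    have hBcard : t ≤ B.card := by
      have := congrArg Finset.card hunion
      rw [Finset.card_union_of_disjoint hdisjAB, Finset.card_erase_of_mem (Finset.mem_univ v),
        Finset.card_univ, Fintype.card_fin] at this
      omega
    obtain ⟨L, hLB, hLcard⟩ := Finset.exists_subset_card_eq hBcard
    refine ⟨v, L, ?_, hLcard, ?_⟩
    · intro hvL
      exact (Finset.mem_filter.mp (hLB hvL)).2.1 rfl
    · have himg : L.image (c v) ⊆ Finset.univ.erase col := by
        intro a ha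
        obtain ⟨u, huL, rfl⟩ := Finset.mem_image.mp ha
        exact Finset.mem_erase.mpr ⟨(Finset.mem_filter.mp (hLB huL)).2.2, Finset.mem_univ _⟩
      have := Finset.card_le_card himg
      rwa [Finset.card_erase_of_mem (Finset.mem_univ col), Finset.card_univ, Fintype.card_fin]
        at this
end

section
/- Every 3-coloring of the edges of K_5 contains a bi-colored copy of the path P_5 on 5 vertices (4 edges). -/
/-- index of the edge {i,j} of K₅ among the 10 edges -/
def kIdx : Fin 5 → Fin 5 → Fin 10 := fun i j =>
  match i.val, j.val with
  | 0, 1 => 0 | 1, 0 => 0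
  | 0, 2 => 1 | 2, 0 => 1
  | 0, 3 => 2 | 3, 0 => 2
  | 0, 4 => 3 | 4, 0 => 3
  | 1, 2 => 4 | 2, 1 => 4
  | 1, 3 => 5 | 3, 1 => 5
  | 1, 4 => 6 | 4, 1 => 6
  | 2, 3 => 7 | 3, 2 => 7
  | 2, 4 => 8 | 4, 2 => 8
  | 3, 4 => 9 | 4, 3 => 9
  | _, _ => 0

def e1 : Fin 10 → Fin 5 := ![0, 0, 0, 0, 1, 1, 1, 2, 2, 3]
def e2 : Fin 10 → Fin 5 := ![1, 2, 3, 4, 2, 3, 4, 3, 4, 4]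

abbrev P5 := Fin 5 × Fin 5 × Fin 5 × Fin 5 × Fin 5

def perms : List P5 := [(0,1,2,3,4), (0,1,2,4,3), (0,1,3,2,4), (0,1,3,4,2), (0,1,4,2,3), (0,1,4,3,2), (0,2,1,3,4), (0,2,1,4,3), (0,2,3,1,4), (0,2,3,4,1), (0,2,4,1,3), (0,2,4,3,1), (0,3,1,2,4), (0,3,1,4,2), (0,3,2,1,4), (0,3,2,4,1), (0,3,4,1,2), (0,3,4,2,1), (0,4,1,2,3), (0,4,1,3,2), (0,4,2,1,3), (0,4,2,3,1), (0,4,3,1,2), (0,4,3,2,1), (1,0,2,3,4), (1,0,2,4,3), (1,0,3,2,4), (1,0,3,4,2), (1,0,4,2,3), (1,0,4,3,2), (1,2,0,3,4), (1,2,0,4,3), (1,2,3,0,4), (1,2,3,4,0), (1,2,4,0,3), (1,2,4,3,0), (1,3,0,2,4), (1,3,0,4,2), (1,3,2,0,4), (1,3,2,4,0), (1,3,4,0,2), (1,3,4,2,0), (1,4,0,2,3), (1,4,0,3,2), (1,4,2,0,3), (1,4,2,3,0), (1,4,3,0,2), (1,4,3,2,0), (2,0,1,3,4), (2,0,1,4,3),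 (2,0,3,1,4), (2,0,3,4,1), (2,0,4,1,3), (2,0,4,3,1), (2,1,0,3,4), (2,1,0,4,3), (2,1,3,0,4), (2,1,3,4,0), (2,1,4,0,3), (2,1,4,3,0), (2,3,0,1,4), (2,3,0,4,1), (2,3,1,0,4), (2,3,1,4,0), (2,3,4,0,1), (2,3,4,1,0), (2,4,0,1,3), (2,4,0,3,1), (2,4,1,0,3), (2,4,1,3,0), (2,4,3,0,1), (2,4,3,1,0), (3,0,1,2,4), (3,0,1,4,2), (3,0,2,1,4), (3,0,2,4,1), (3,0,4,1,2), (3,0,4,2,1), (3,1,0,2,4), (3,1,0,4,2), (3,1,2,0,4), (3,1,2,4,0), (3,1,4,0,2), (3,1,4,2,0), (3,2,0,1,4), (3,2,0,4,1), (3,2,1,0,4), (3,2,1,4,0), (3,2,4,0,1), (3,2,4,1,0), (3,4,0,1,2), (3,4,0,2,1), (3,4,1,0,2), (3,4,1,2,0), (3,4,2,0,1), (3,4,2,1,0), (4,0,1,2,3), (4,0,1,3,2), (4,0,2,1,3), (4,0,2,3,1), (4,0,3,1,2), (4,0,3,2,1), (4,1,0,2,3), (4,1,0,3,2), (4,1,2,0,3),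 (4,1,2,3,0), (4,1,3,0,2), (4,1,3,2,0), (4,2,0,1,3), (4,2,0,3,1), (4,2,1,0,3), (4,2,1,3,0), (4,2,3,0,1), (4,2,3,1,0), (4,3,0,1,2), (4,3,0,2,1), (4,3,1,0,2), (4,3,1,2,0), (4,3,2,0,1), (4,3,2,1,0)]

def distinctP (p : P5) : Bool :=
  p.1 != p.2.1 && p.1 != p.2.2.1 && p.1 != p.2.2.2.1 && p.1 != p.2.2.2.2 &&
  p.2.1 != p.2.2.1 && p.2.1 != p.2.2.2.1 && p.2.1 != p.2.2.2.2 &&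
  p.2.2.1 != p.2.2.2.1 && p.2.2.1 != p.2.2.2.2 && p.2.2.2.1 != p.2.2.2.2

def toV (p : P5) : Fin 5 → Fin 5 := ![p.1, p.2.1, p.2.2.1, p.2.2.2.1, p.2.2.2.2]

def avoids (b : Fin 10 → Bool) (p : P5) : Bool :=
  distinctP p && !b (kIdx p.1 p.2.1) && !b (kIdx p.2.1 p.2.2.1) &&
    !b (kIdx p.2.2.1 p.2.2.2.1) && !b (kIdx p.2.2.2.1 p.2.2.2.2)

set_option maxRecDepth 4000 in
set_option maxHeartbeats 2000000 in
lemma key : ∀ b0 b1 b2 b3 b4 b5 b6 b7 b8 b9 : Bool,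
    (if b0 then 1 else 0) + (if b1 then 1 else 0) + (if b2 then 1 else 0) +
    (if b3 then 1 else 0) + (if b4 then 1 else 0) + (if b5 then 1 else 0) +
    (if b6 then 1 else 0) + (if b7 then 1 else 0) + (if b8 then 1 else 0) +
    (if b9 then 1 else 0) ≤ 3 →
    (perms.any (avoids ![b0, b1, b2, b3, b4, b5, b6, b7, b8, b9])) = true := by
  decide

lemma dist_inj : ∀ p : P5, distinctP p = true → Function.Injective (toV p) := by
  rintro ⟨a, b, d, e, f⟩ h
  simp only [distinctP, Bool.and_eq_true, bne_iff_ne, ne_eq] at h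
  obtain ⟨⟨⟨⟨⟨⟨⟨⟨⟨h1, h2⟩, h3⟩, h4⟩, h5⟩, h6⟩, h7⟩, h8⟩, h9⟩, h10⟩ := h
  intro i j hij
  fin_cases i <;> fin_cases j <;> simp_all [toV]

lemma e_lt : ∀ k : Fin 10, e1 k < e2 k := by decide

lemma e_inj : ∀ k l : Fin 10, e1 k = e1 l → e2 k = e2 l → k = l := by decide

lemma edge_eq (c : Fin 5 → Fin 5 → Fin 3) (hsym : ∀ i j, c i j = c j i)
    (i j : Fin 5) (hij : i ≠ j) :
    c (e1 (kIdx i j)) (e2 (kIdx i j)) = c i j := by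
  fin_cases i <;> fin_cases j <;>
    first | exact absurd rfl hij | rfl | exact hsym _ _

/-- P₅ is ξ-primitive: every 3-edge-coloring of K₅ contains a path on 5 vertices
whose 4 edges use at most two colors. -/
theorem P5_xi_primitive (c : Fin 5 → Fin 5 → Fin 3) (hsym : ∀ i j, c i j = c j i) :
    ∃ v : Fin 5 → Fin 5, Function.Injective v ∧
      ({c (v 0) (v 1), c (v 1) (v 2), c (v 2) (v 3), c (v 3) (v 4)} :
        Finset (Fin 3)).card ≤ 2 := by
  -- pigeonhole: some color γ is used on at most 3 edges
  classical
  set S : Finset (Fin 5 × Fin 5) := Finset.univ.filter (fun p => p.1 < p.2) with hS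
  have hScard : S.card = 10 := by decide
  have hpig : S.card < (Finset.univ : Finset (Fin 3)).card * 4 := by
    rw [hScard]; decide
  obtain ⟨γ, -, hγ⟩ := Finset.exists_card_fiber_lt_of_card_lt_mul
    (s := S) (t := Finset.univ) (f := fun p => c p.1 p.2) (n := 4) hpig
  -- the bad-edge indicator
  set b : Fin 10 → Bool := fun k => decide (c (e1 k) (e2 k) = γ) with hb
  -- at most 3 bad edges
  have hcount : (Finset.univ.filter (fun k : Fin 10 => b k = true)).card ≤ 3 := by
    have hmap : ∀ k ∈ Finset.univ.filter (fun k : Fin 10 => b k = true),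
        (fun k => (e1 k, e2 k)) k ∈ S.filter (fun p => c p.1 p.2 = γ) := by
      intro k hk
      rw [Finset.mem_filter] at hk ⊢
      refine ⟨?_, of_decide_eq_true hk.2⟩
      rw [hS, Finset.mem_filter]
      exact ⟨Finset.mem_univ _, e_lt k⟩
    have hinj : ∀ k ∈ Finset.univ.filter (fun k : Fin 10 => b k = true),
        ∀ l ∈ Finset.univ.filter (fun k : Fin 10 => b k = true),
        (fun k => (e1 k, e2 k)) k = (fun k => (e1 k, e2 k)) l → k = l := by
      intro k _ l _ h
      exact e_inj k l (congrArg Prod.fst h) (congrArg Prod.snd h)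
    have := Finset.card_le_card_of_injOn _ hmap hinj
    omega
  -- rewrite the count as the explicit sum
  have hsum : (if b 0 then 1 else 0) + (if b 1 then 1 else 0) + (if b 2 then 1 else 0) +
      (if b 3 then 1 else 0) + (if b 4 then 1 else 0) + (if b 5 then 1 else 0) +
      (if b 6 then 1 else 0) + (if b 7 then 1 else 0) + (if b 8 then 1 else 0) +
      (if b 9 then 1 else 0) ≤ 3 := by
    have h2 := hcount
    rw [Finset.card_filter] at h2
    simp only [Fin.sum_univ_succ, Fin.sum_univ_zero] at h2
    simpa [add_assoc] using h2
  have hb' : b = ![b 0, b 1, b 2, b 3, b 4, b 5, b 6, b 7, b 8, b 9] := by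
    funext k; fin_cases k <;> rfl
  have hkey := key (b 0) (b 1) (b 2) (b 3) (b 4) (b 5) (b 6) (b 7) (b 8) (b 9) hsum
  rw [← hb', List.any_eq_true] at hkey
  obtain ⟨p, hp, hav⟩ := hkey
  rw [avoids] at hav
  simp only [Bool.and_eq_true, Bool.not_eq_true'] at hav
  obtain ⟨⟨⟨⟨hd, h1⟩, h2⟩, h3⟩, h4⟩ := hav
  have hinj := dist_inj p hd
  refine ⟨toV p, hinj, ?_⟩
  have e01 : toV p 0 ≠ toV p 1 := fun h => by simpa using hinj h
  have e12 : toV p 1 ≠ toV p 2 := fun h => by simpa using hinj h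
  have e23 : toV p 2 ≠ toV p 3 := fun h => by simpa using hinj h
  have e34 : toV p 3 ≠ toV p 4 := fun h => by simpa using hinj h
  -- each path edge has color ≠ γ
  have key_ne : ∀ (i j : Fin 5), i ≠ j → b (kIdx i j) = false → c i j ≠ γ := by
    intro i j hij hbf
    rw [hb] at hbf
    have := of_decide_eq_false hbf
    rwa [edge_eq c hsym i j hij] at this
  have n1 : c (toV p 0) (toV p 1) ≠ γ := key_ne _ _ e01 h1
  have n2 : c (toV p 1) (toV p 2) ≠ γ := key_ne _ _ e12 h2
  have n3 : c (toV p 2) (toV p 3) ≠ γ := key_ne _ _ e23 h3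
  have n4 : c (toV p 3) (toV p 4) ≠ γ := key_ne _ _ e34 h4
  have hsub : ({c (toV p 0) (toV p 1), c (toV p 1) (toV p 2), c (toV p 2) (toV p 3),
      c (toV p 3) (toV p 4)} : Finset (Fin 3)) ⊆ Finset.univ.erase γ := by
    intro a ha
    simp only [Finset.mem_insert, Finset.mem_singleton] at ha
    rw [Finset.mem_erase]
    rcases ha with h | h | h | h <;> subst h <;>
      exact ⟨by assumption, Finset.mem_univ _⟩
  have := Finset.card_le_card hsub
  have herase : (Finset.univ.erase γ).card = 2 := by
    rw [Finset.card_erase_of_mem (Finset.mem_univ _)]; rfl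
  omega
end

section
/- Every 3-coloring of the edges of K_6 contains a bi-colored copy of the broom B_{3,3}: the tree on 6 vertices obtained from a star with 3 leaves and a path on 3 vertices sharing exactly the star center, which is an endpoint of the path. -/
private lemma fin3_eq (a b x y : Fin 3) (hab : a ≠ b)
    (hx : x ≠ a) (hx' : x ≠ b) (hy : y ≠ a) (hy' : y ≠ b) : x = y := by
  revert a b x y; decide

private lemma card_pair_le (a b : Fin 3) : ({a, b} : Finset (Fin 3)).card ≤ 2 := by
  apply le_trans (Finset.card_insert_le _ _); simp

private lemma key_s11 (c : Fin 6 → Fin 6 → Fin 3) (hsym : ∀ i j, c i j = c j i)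
    (v u w1 w2 w3 w4 : Fin 6)
    (hnd : ([v, w1, w2, w3, w4, u] : List (Fin 6)).Nodup)
    (a b : Fin 3) (hab : a ≠ b)
    (h1 : c v w1 = a ∨ c v w1 = b) (h2 : c v w2 = a ∨ c v w2 = b)
    (h3 : c v w3 = a ∨ c v w3 = b) (h4 : c v w4 = a ∨ c v w4 = b) :
    ∃ v' l1 l2 l3 p1 p2 : Fin 6,
      ([v', l1, l2, l3, p1, p2] : List (Fin 6)).Nodup ∧
      ({c v' l1, c v' l2, c v' l3, c v' p1, c p1 p2} : Finset (Fin 3)).card ≤ 2 := by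
  have hnd' := hnd
  simp only [List.nodup_cons, List.mem_cons, List.mem_singleton, List.not_mem_nil,
    List.nodup_nil, not_or] at hnd'
  obtain ⟨⟨n1,n2,n3,n4,n5,-⟩,⟨m1,m2,m3,m4,-⟩,⟨o1,o2,o3,-⟩,⟨q1,q2,-⟩,⟨r1,-⟩,-⟩ := hnd'
  by_cases g1 : c w1 u = a ∨ c w1 u = b
  · refine ⟨v, w2, w3, w4, w1, u, ?_, ?_⟩
    · simp only [List.nodup_cons, List.mem_cons, List.mem_singleton, List.not_mem_nil,
        List.nodup_nil, not_or]
      exact ⟨⟨n2,n3,n4,n1,n5,not_false⟩,⟨o1,o2,fun h => m1 h.symm,o3,not_false⟩,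
        ⟨q1,fun h => m2 h.symm,q2,not_false⟩,⟨fun h => m3 h.symm,r1,not_false⟩,
        ⟨m4,not_false⟩,not_false,trivial⟩
    · refine le_trans (Finset.card_le_card ?_) (card_pair_le a b)
      intro x hx
      simp only [Finset.mem_insert, Finset.mem_singleton] at hx ⊢
      rcases hx with rfl|rfl|rfl|rfl|rfl
      exacts [h2, h3, h4, h1, g1]
  by_cases g2 : c w2 u = a ∨ c w2 u = b
  · refine ⟨v, w1, w3, w4, w2, u, ?_, ?_⟩
    · simp only [List.nodup_cons, List.mem_cons, List.mem_singleton, List.not_mem_nil,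
        List.nodup_nil, not_or]
      exact ⟨⟨n1,n3,n4,n2,n5,not_false⟩,⟨m2,m3,m1,m4,not_false⟩,
        ⟨q1,fun h => o1 h.symm,q2,not_false⟩,⟨fun h => o2 h.symm,r1,not_false⟩,
        ⟨o3,not_false⟩,not_false,trivial⟩
    · refine le_trans (Finset.card_le_card ?_) (card_pair_le a b)
      intro x hx
      simp only [Finset.mem_insert, Finset.mem_singleton] at hx ⊢
      rcases hx with rfl|rfl|rfl|rfl|rfl
      exacts [h1, h3, h4, h2, g2]
  by_cases g3 : c w3 u = a ∨ c w3 u = b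
  · refine ⟨v, w1, w2, w4, w3, u, ?_, ?_⟩
    · simp only [List.nodup_cons, List.mem_cons, List.mem_singleton, List.not_mem_nil,
        List.nodup_nil, not_or]
      exact ⟨⟨n1,n2,n4,n3,n5,not_false⟩,⟨m1,m3,m2,m4,not_false⟩,
        ⟨o2,o1,o3,not_false⟩,⟨fun h => q1 h.symm,r1,not_false⟩,
        ⟨q2,not_false⟩,not_false,trivial⟩
    · refine le_trans (Finset.card_le_card ?_) (card_pair_le a b)
      intro x hx
      simp only [Finset.mem_insert, Finset.mem_singleton] at hx ⊢
      rcases hx with rfl|rfl|rfl|rfl|rfl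
      exacts [h1, h2, h4, h3, g3]
  by_cases g4 : c w4 u = a ∨ c w4 u = b
  · refine ⟨v, w1, w2, w3, w4, u, hnd, ?_⟩
    refine le_trans (Finset.card_le_card ?_) (card_pair_le a b)
    intro x hx
    simp only [Finset.mem_insert, Finset.mem_singleton] at hx ⊢
    rcases hx with rfl|rfl|rfl|rfl|rfl
    exacts [h1, h2, h3, h4, g4]
  · push_neg at g1 g2 g3 g4
    have e1 : c w1 u = c w4 u := fin3_eq a b _ _ hab g1.1 g1.2 g4.1 g4.2
    have e2 : c w2 u = c w4 u := fin3_eq a b _ _ hab g2.1 g2.2 g4.1 g4.2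
    have e3 : c w3 u = c w4 u := fin3_eq a b _ _ hab g3.1 g3.2 g4.1 g4.2
    refine ⟨u, w1, w2, w3, w4, v, ?_, ?_⟩
    · simp only [List.nodup_cons, List.mem_cons, List.mem_singleton, List.not_mem_nil,
        List.nodup_nil, not_or]
      exact ⟨⟨fun h => m4 h.symm, fun h => o3 h.symm, fun h => q2 h.symm,
          fun h => r1 h.symm, fun h => n5 h.symm, not_false⟩,
        ⟨m1,m2,m3,fun h => n1 h.symm,not_false⟩,
        ⟨o1,o2,fun h => n2 h.symm,not_false⟩,
        ⟨q1,fun h => n3 h.symm,not_false⟩,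
        ⟨fun h => n4 h.symm,not_false⟩,not_false,trivial⟩
    · have hu1 : c u w1 = c w4 u := by rw [hsym]; exact e1
      have hu2 : c u w2 = c w4 u := by rw [hsym]; exact e2
      have hu3 : c u w3 = c w4 u := by rw [hsym]; exact e3
      have hu4 : c u w4 = c w4 u := hsym u w4
      rw [hu1, hu2, hu3, hu4, hsym w4 v]
      simp only [Finset.insert_idem]
      exact card_pair_le _ _

private lemma pigeon (x1 x2 x3 x4 x5 : Fin 3) : ∃ a b : Fin 3, a ≠ b ∧
    (((x2 = a ∨ x2 = b) ∧ (x3 = a ∨ x3 = b) ∧ (x4 = a ∨ x4 = b) ∧ (x5 = a ∨ x5 = b)) ∨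
     ((x1 = a ∨ x1 = b) ∧ (x3 = a ∨ x3 = b) ∧ (x4 = a ∨ x4 = b) ∧ (x5 = a ∨ x5 = b)) ∨
     ((x1 = a ∨ x1 = b) ∧ (x2 = a ∨ x2 = b) ∧ (x4 = a ∨ x4 = b) ∧ (x5 = a ∨ x5 = b)) ∨
     ((x1 = a ∨ x1 = b) ∧ (x2 = a ∨ x2 = b) ∧ (x3 = a ∨ x3 = b) ∧ (x5 = a ∨ x5 = b)) ∨
     ((x1 = a ∨ x1 = b) ∧ (x2 = a ∨ x2 = b) ∧ (x3 = a ∨ x3 = b) ∧ (x4 = a ∨ x4 = b))) := by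
  fin_cases x1 <;> fin_cases x2 <;> fin_cases x3 <;> fin_cases x4 <;> fin_cases x5 <;> decide

/-- B₃,₃ is ξ-primitive: every 3-edge-coloring of K₆ contains a bi-colored broom
consisting of a center v with three leaves l₁, l₂, l₃ and a path v–p₁–p₂. -/
theorem B33_xi_primitive (c : Fin 6 → Fin 6 → Fin 3) (hsym : ∀ i j, c i j = c j i) :
    ∃ v l1 l2 l3 p1 p2 : Fin 6,
      ([v, l1, l2, l3, p1, p2] : List (Fin 6)).Nodup ∧
      ({c v l1, c v l2, c v l3, c v p1, c p1 p2} : Finset (Fin 3)).card ≤ 2 := by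
  obtain ⟨a, b, hab, h⟩ := pigeon (c 0 1) (c 0 2) (c 0 3) (c 0 4) (c 0 5)
  rcases h with ⟨h1, h2, h3, h4⟩ | ⟨h1, h2, h3, h4⟩ | ⟨h1, h2, h3, h4⟩ |
    ⟨h1, h2, h3, h4⟩ | ⟨h1, h2, h3, h4⟩
  · exact key_s11 c hsym 0 1 2 3 4 5 (by decide) a b hab h1 h2 h3 h4
  · exact key_s11 c hsym 0 2 1 3 4 5 (by decide) a b hab h1 h2 h3 h4
  · exact key_s11 c hsym 0 3 1 2 4 5 (by decide) a b hab h1 h2 h3 h4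
  · exact key_s11 c hsym 0 4 1 2 3 5 (by decide) a b hab h1 h2 h3 h4
  · exact key_s11 c hsym 0 5 1 2 3 4 (by decide) a b hab h1 h2 h3 h4
end

section
/- Let T be a tree on n vertices with domination number τ(T) ≥ 3 + ℓ(T), where ℓ(T) is the maximum number of leaves adjacent to a single vertex. Then there is a 3-edge-coloring of K_n in which every copy of T uses all three colors (T is non-ξ-primitive). Concretely, for any integer a with ℓ(T) < a and a + 1 < τ(T) and a ≤ n − 3: fix a set V_a of a vertices and a vertex v outside V_a; color all edges incident to v red, all other edges incident to V_a blue, and all remaining edges green; then every copy of T contains edges of all three colors. -/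
/-!
Fix a vertex `v` and a set `A` of `a` further vertices, with `ℓ(T) < a` and `a + 1 < τ(T)`;
colour the edges at `v` red (`0`), the other edges meeting `A` blue (`1`) and the rest
green (`2`). Pull the colouring back along a copy of `T`, and let `w` and `B` be the
preimages of `v` and `A`. A red edge exists since `w` is not isolated. Without a blue edge,
every vertex of `B` has only `w` as a neighbour, so `B` is a set of `a > ℓ(T)` leaves at `w`.
Without a green edge, `B ∪ {w}` dominates `T`, so `τ(T) ≤ a + 1`.
-/

/-- `S` is a dominating set of `G`: every vertex is in `S` or adjacent to a vertex of `S`. -/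
def IsDomSet {V : Type*} (G : SimpleGraph V) (S : Finset V) : Prop :=
  ∀ v, v ∈ S ∨ ∃ u ∈ S, G.Adj u v

/-- The domination number of `G`. -/
noncomputable def domNum {V : Type*} [Fintype V] (G : SimpleGraph V) : ℕ :=
  sInf {k | ∃ S : Finset V, S.card = k ∧ IsDomSet G S}

/-- `v` is a leaf of `G`: it has exactly one neighbor. -/
def IsLeaf {V : Type*} (G : SimpleGraph V) (v : V) : Prop :=
  ∃! u, G.Adj v u

/-- ℓ(G): the largest number of leaves adjacent to a single vertex. -/
noncomputable def maxLeaves {V : Type*} [Fintype V] (G : SimpleGraph V) : ℕ :=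
  sSup {k | ∃ (v : V) (L : Finset V), L.card = k ∧ ∀ u ∈ L, G.Adj v u ∧ IsLeaf G u}

variable {V W : Type*}

section Domination

variable [Fintype V] {G : SimpleGraph V}

theorem domNum_le_card {S : Finset V} (hS : IsDomSet G S) : domNum G ≤ S.card :=
  Nat.sInf_le ⟨S, rfl, hS⟩

theorem domNum_le_card_univ : domNum G ≤ Fintype.card V :=
  domNum_le_card fun v => Or.inl (Finset.mem_univ v)

theorem domNum_lt_card_univ [DecidableEq V] [Nonempty V] (hG : ∀ x, ∃ y, G.Adj x y) :
    domNum G < Fintype.card V := by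
  obtain ⟨x⟩ := ‹Nonempty V›
  have hS : IsDomSet G (Finset.univ.erase x) := by
    intro u
    by_cases hu : u = x
    · obtain ⟨y, hy⟩ := hG u
      exact Or.inr ⟨y, Finset.mem_erase.mpr ⟨hu ▸ hy.ne', Finset.mem_univ y⟩, hy.symm⟩
    · exact Or.inl (Finset.mem_erase.mpr ⟨hu, Finset.mem_univ u⟩)
  have := domNum_le_card hS
  rw [Finset.card_erase_of_mem (Finset.mem_univ x), Finset.card_univ] at this
  have := Fintype.card_pos (α := V)
  omega

theorem card_le_maxLeaves {w : V} {L : Finset V} (hL : ∀ u ∈ L, G.Adj w u ∧ IsLeaf G u) :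
    L.card ≤ maxLeaves G := by
  refine le_csSup ⟨Fintype.card V, ?_⟩ ⟨w, L, rfl, hL⟩
  rintro k ⟨-, L', rfl, -⟩
  exact Finset.card_le_univ L'

end Domination

section StarColoring

variable [DecidableEq V] [DecidableEq W]

def starColoring (v : V) (A : Finset V) (i j : V) : Fin 3 :=
  if i = v ∨ j = v then 0 else if i ∈ A ∨ j ∈ A then 1 else 2

theorem starColoring_comm (v : V) (A : Finset V) (i j : V) :
    starColoring v A i j = starColoring v A j i := by
  simp only [starColoring, or_comm]

theorem starColoring_equiv (e : V ≃ W) (v : W) (A : Finset W) (i j : V) :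
    starColoring v A (e i) (e j) = starColoring (e.symm v) (A.map e.symm.toEmbedding) i j := by
  simp only [starColoring, Finset.mem_map_equiv, Equiv.symm_symm, Equiv.eq_symm_apply]

variable {G : SimpleGraph V} (hG : ∀ x, ∃ y, G.Adj x y) {w : V} {B : Finset V}
include hG

theorem exists_adj_starColoring_eq_zero : ∃ u x, G.Adj u x ∧ starColoring w B u x = 0 := by
  obtain ⟨x, hx⟩ := hG w
  exact ⟨w, x, hx, by simp [starColoring]⟩

theorem exists_adj_starColoring_eq_one [Fintype V] (hw : w ∉ B) (hB : maxLeaves G < B.card) :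
    ∃ u x, G.Adj u x ∧ starColoring w B u x = 1 := by
  by_contra! hcon
  have hnbr : ∀ u ∈ B, ∀ x, G.Adj u x → x = w := by
    intro u hu x hx
    by_contra hxw
    exact hcon u x hx (by simp [starColoring, hu, hxw, ne_of_mem_of_not_mem hu hw])
  have hleaves : ∀ u ∈ B, G.Adj w u ∧ IsLeaf G u := by
    intro u hu
    obtain ⟨x, hx⟩ := hG u
    obtain rfl := hnbr u hu x hx
    exact ⟨hx.symm, x, hx, hnbr u hu⟩
  exact hB.not_ge (card_le_maxLeaves hleaves)

theorem exists_adj_starColoring_eq_two [Fintype V] (hB : B.card + 1 < domNum G) :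
    ∃ u x, G.Adj u x ∧ starColoring w B u x = 2 := by
  by_contra! hcon
  have hdom : IsDomSet G (insert w B) := by
    intro u
    by_cases hu : u ∈ insert w B
    · exact Or.inl hu
    obtain ⟨x, hx⟩ := hG u
    by_cases hxC : x ∈ insert w B
    · exact Or.inr ⟨x, hxC, hx.symm⟩
    simp only [Finset.mem_insert, not_or] at hu hxC
    exact absurd (by simp [starColoring, hu.1, hu.2, hxC.1, hxC.2]) (hcon u x hx)
  have := (domNum_le_card hdom).trans (Finset.card_insert_le w B)
  omega

theorem forall_exists_adj_starColoring_eq [Fintype V] (hw : w ∉ B)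
    (hleaves : maxLeaves G < B.card) (hdom : B.card + 1 < domNum G) (col : Fin 3) :
    ∃ u x, G.Adj u x ∧ starColoring w B u x = col := by
  fin_cases col
  exacts [exists_adj_starColoring_eq_zero hG, exists_adj_starColoring_eq_one hG hw hleaves,
    exists_adj_starColoring_eq_two hG hdom]

end StarColoring

/-- A tree `T` on `n` vertices with τ(T) ≥ 3 + ℓ(T) is non-ξ-primitive: some
3-edge-coloring of Kₙ makes every copy of `T` use all three colors. -/
theorem tree_large_domination_non_xi_primitive (n : ℕ) (T : SimpleGraph (Fin n))
    (hT : T.IsTree) (hdom : 3 + maxLeaves T ≤ domNum T) :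
    ∃ c : Fin n → Fin n → Fin 3, (∀ i j, c i j = c j i) ∧
      ∀ φ : Fin n → Fin n, Function.Injective φ →
        ∀ col : Fin 3, ∃ u v : Fin n, T.Adj u v ∧ c (φ u) (φ v) = col := by
  have hn : 3 + maxLeaves T ≤ n := by simpa using hdom.trans (domNum_le_card_univ (G := T))
  have : Nontrivial (Fin n) := Fin.nontrivial_iff_two_le.mpr (by omega)
  have hT' : ∀ x, ∃ y, T.Adj x y := hT.connected.preconnected.exists_adj_of_nontrivial
  obtain ⟨v⟩ : Nonempty (Fin n) := inferInstance
  have hcard : maxLeaves T + 1 ≤ (Finset.univ.erase v).card := by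
    have := domNum_lt_card_univ hT'
    rw [Finset.card_erase_of_mem (Finset.mem_univ _), Finset.card_univ] at *
    omega
  obtain ⟨A, hA, hAcard⟩ := Finset.exists_subset_card_eq hcard
  refine ⟨starColoring v A, starColoring_comm v A, fun φ hφ col => ?_⟩
  let e := Equiv.ofBijective φ (Finite.injective_iff_bijective.mp hφ)
  simp only [show ∀ u, φ u = e u from fun _ => rfl, starColoring_equiv]
  refine forall_exists_adj_starColoring_eq hT' ?_ ?_ ?_ col
  · simpa [Finset.mem_map_equiv] using fun h => Finset.notMem_erase v _ (hA h)
  all_goals rw [Finset.card_map]; omega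
end

section
/- Let T be a tree on n ≥ 4 vertices with maximum degree Δ(T) > ⌈2(n−1)/3⌉. Then in any balanced 3-edge-coloring of K_n (which exists), every copy of T uses all three colors; hence T is non-ξ-primitive. -/
/-- A tree `T` on n ≥ 4 vertices containing a vertex of degree > ⌈2(n−1)/3⌉:
in any balanced 3-edge-coloring of Kₙ every copy of `T` uses all three colors
(hence `T` is non-ξ-primitive). -/
theorem tree_large_degree_non_xi_primitive (n : ℕ) (hn : 4 ≤ n)
    (T : SimpleGraph (Fin n)) [DecidableRel T.Adj] (hT : T.IsTree)
    (hdeg : ∃ v : Fin n, (2 * (n - 1) + 2) / 3 < T.degree v)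
    (c : Fin n → Fin n → Fin 3) (hsym : ∀ i j, c i j = c j i)
    (hbal : ∀ v : Fin n, ∀ c1 c2 : Fin 3,
      ((Finset.univ.filter fun u => u ≠ v ∧ c v u = c1).card : ℤ) -
        ((Finset.univ.filter fun u => u ≠ v ∧ c v u = c2).card : ℤ) ≤ 1) :
    ∀ φ : Fin n → Fin n, Function.Injective φ →
      ∀ col : Fin 3, ∃ u v : Fin n, T.Adj u v ∧ c (φ u) (φ v) = col := by
  intro φ hφ col
  by_contra hcon
  push_neg at hcon
  obtain ⟨v, hv⟩ := hdeg
  set w := φ v with hw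
  set f : Fin 3 → ℕ :=
    fun x => (Finset.univ.filter fun u => u ≠ w ∧ c w u = x).card with hf
  have hN : (Finset.univ.filter fun u : Fin n => u ≠ w).card = n - 1 := by
    rw [Finset.filter_ne']
    simp
  have hsum : (Finset.univ.filter fun u : Fin n => u ≠ w).card = f 0 + f 1 + f 2 := by
    rw [Finset.card_eq_sum_card_fiberwise (f := fun u => c w u) (t := Finset.univ)
      (fun _ _ => Finset.mem_univ _), Fin.sum_univ_three]
    simp [hf, Finset.filter_filter]
  have hsplit : f col + (Finset.univ.filter fun u : Fin n => u ≠ w ∧ c w u ≠ col).card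
      = (Finset.univ.filter fun u : Fin n => u ≠ w).card := by
    have := Finset.card_filter_add_card_filter_not
      (s := Finset.univ.filter fun u : Fin n => u ≠ w) (p := fun u => c w u = col)
    simpa [hf, Finset.filter_filter] using this
  have hb : ∀ x : Fin 3, f x ≤ f col + 1 := by
    intro x
    have := hbal w x col
    simp only [hf]
    omega
  have hB3 : 3 * (Finset.univ.filter fun u : Fin n => u ≠ w ∧ c w u ≠ col).card
      ≤ 2 * (n - 1) + 2 := by
    have h0 := hb 0
    have h1 := hb 1
    have h2 := hb 2
    have hcol : col = 0 ∨ col = 1 ∨ col = 2 := by fin_cases col <;> simp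
    rcases hcol with rfl | rfl | rfl <;> omega
  have hsub : (T.neighborFinset v).image φ
      ⊆ Finset.univ.filter fun u : Fin n => u ≠ w ∧ c w u ≠ col := by
    intro x hx
    obtain ⟨u, hu, rfl⟩ := Finset.mem_image.mp hx
    rw [SimpleGraph.mem_neighborFinset] at hu
    refine Finset.mem_filter.mpr ⟨Finset.mem_univ _, ?_, ?_⟩
    · exact fun h => hu.ne' (hφ h)
    · exact hcon v u hu
  have hcard : T.degree v ≤
      (Finset.univ.filter fun u : Fin n => u ≠ w ∧ c w u ≠ col).card := by
    calc T.degree v = ((T.neighborFinset v).image φ).card := by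
          rw [Finset.card_image_of_injective _ hφ]; rfl
      _ ≤ _ := Finset.card_le_card hsub
  omega
end

section
/- For every connected graph H on n ≥ 4 vertices there exists a 2-coloring of the edges of K_n such that every copy of H uses both colors. (If some spanning tree of H is a star, color the edges of a Hamiltonian cycle red and the rest blue; otherwise color all edges at a fixed vertex v red and the rest blue.) -/
/-!
If `H` has a universal vertex `v`, colour a Hamiltonian cycle red and everything else blue: the
image of `v` in any copy of `H` is joined to every other vertex, in particular to a neighbour on
the cycle and, as `n ≥ 4`, to a vertex that is not. Otherwise colour red the edges
at one vertex `r`: in a copy of `H` the preimage `u` of `r` is not isolated, which gives a red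
edge, and some vertex `w` is not adjacent to `u`; an edge of `H` at `w` avoids `u`, so it is blue.
-/

namespace SimpleGraph

variable {V : Type*}

/-- Colouring the edges of the complete graph on `V` by membership in `G` makes every copy of `H`
use both colours. -/
def BicolorsCopies (G H : SimpleGraph V) : Prop :=
  ∀ φ : V → V, Function.Injective φ →
    (∃ u v, H.Adj u v ∧ G.Adj (φ u) (φ v)) ∧ ∃ u v, H.Adj u v ∧ ¬G.Adj (φ u) (φ v)

theorem BicolorsCopies.exists_coloring {G H : SimpleGraph V} (hG : G.BicolorsCopies H) :
    ∃ c : V → V → Fin 2, (∀ i j, c i j = c j i) ∧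
      ∀ φ : V → V, Function.Injective φ →
        ∀ col : Fin 2, ∃ u v : V, H.Adj u v ∧ c (φ u) (φ v) = col := by
  classical
  refine ⟨fun i j => if G.Adj i j then 1 else 0, fun i j => by simp only [G.adj_comm], ?_⟩
  intro φ hφ col
  obtain ⟨⟨u, v, huv, hin⟩, u', v', huv', hout⟩ := hG φ hφ
  fin_cases col
  · exact ⟨u', v', huv', by simp [hout]⟩
  · exact ⟨u, v, huv, by simp [hin]⟩

theorem IsUniversal.exists_adj_map_eq {W : Type*} {H : SimpleGraph V} {v : V}
    (hv : H.IsUniversal v) {φ : V → W} (hφ : Function.Surjective φ) {w : W} (hw : φ v ≠ w) :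
    ∃ x, H.Adj v x ∧ φ x = w := by
  obtain ⟨x, rfl⟩ := hφ w
  exact ⟨x, hv (ne_of_apply_ne φ hw), rfl⟩

theorem bicolorsCopies_of_isUniversal [Finite V] {G H : SimpleGraph V} {v : V}
    (hv : H.IsUniversal v) (hG_adj : ∀ a, ∃ b, G.Adj a b) (hG_univ : ∀ a, ¬G.IsUniversal a) :
    G.BicolorsCopies H := by
  intro φ hφ
  have hsurj := Finite.surjective_of_injective hφ
  obtain ⟨w, hw⟩ := hG_adj (φ v)
  obtain ⟨w', hw'⟩ : ∃ w', φ v ≠ w' ∧ ¬G.Adj (φ v) w' := by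
    simpa [IsUniversal] using hG_univ (φ v)
  obtain ⟨x, hvx, rfl⟩ := hv.exists_adj_map_eq hsurj hw.ne
  obtain ⟨x', hvx', rfl⟩ := hv.exists_adj_map_eq hsurj hw'.1
  exact ⟨⟨v, x, hvx, hw⟩, v, x', hvx', hw'.2⟩

theorem bicolorsCopies_starGraph [Finite V] {H : SimpleGraph V} (hH_adj : ∀ a, ∃ b, H.Adj a b)
    (hH_univ : ∀ a, ¬H.IsUniversal a) (r : V) : (starGraph r).BicolorsCopies H := by
  intro φ hφ
  obtain ⟨u, rfl⟩ := Finite.surjective_of_injective hφ r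
  obtain ⟨y, huy⟩ := hH_adj u
  obtain ⟨w, hwu, hnadj⟩ : ∃ w, u ≠ w ∧ ¬H.Adj u w := by simpa [IsUniversal] using hH_univ u
  obtain ⟨x, hwx⟩ := hH_adj w
  have hxu : x ≠ u := by
    rintro rfl
    exact hnadj hwx.symm
  refine ⟨⟨u, y, huy, ?_⟩, ⟨w, x, hwx, ?_⟩⟩
  · exact starGraph_center_adj (hφ.ne huy.ne)
  · simp [hφ.eq_iff, hwu.symm, hxu]

theorem cycleGraph_not_isUniversal {n : ℕ} (hn : 4 ≤ n) (v : Fin n) :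
    ¬(cycleGraph n).IsUniversal v := by
  obtain ⟨m, rfl⟩ : ∃ m, n = m + 3 := ⟨n - 3, by omega⟩
  rw [← degree_lt_card_sub_one, cycleGraph_degree_three_le, Fintype.card_fin]
  omega

end SimpleGraph

open SimpleGraph

/-- For every connected graph H on n ≥ 4 vertices, there is a 2-edge-coloring of Kₙ
such that every copy of H uses both colors. -/
theorem two_coloring_every_copy_bicolored (n : ℕ) (hn : 4 ≤ n)
    (H : SimpleGraph (Fin n)) (hconn : H.Connected) :
    ∃ c : Fin n → Fin n → Fin 2, (∀ i j, c i j = c j i) ∧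
      ∀ φ : Fin n → Fin n, Function.Injective φ →
        ∀ col : Fin 2, ∃ u v : Fin n, H.Adj u v ∧ c (φ u) (φ v) = col := by
  have : Nontrivial (Fin n) := Fin.nontrivial_iff_two_le.mpr (by omega)
  by_cases huniv : ∃ v, H.IsUniversal v
  · obtain ⟨v, hv⟩ := huniv
    exact (bicolorsCopies_of_isUniversal hv cycleGraph_preconnected.exists_adj_of_nontrivial
      (cycleGraph_not_isUniversal hn)).exists_coloring
  · push Not at huniv
    have : NeZero n := ⟨by omega⟩
    exact (bicolorsCopies_starGraph hconn.preconnected.exists_adj_of_nontrivial huniv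
      0).exists_coloring
end

section
/- For all sufficiently large n: if a ≥ 1 and b ≥ 0 are integers with a < ln ln n and b < n/(ln n)^5, then C(n,a)·C(n−a,b)·(1 − 3^{−3a})^{⌊(n−a−b)/3⌋} < 1. -/
/-- For all sufficiently large n: if 1 ≤ a < ln ln n and 0 ≤ b < n/(ln n)⁵, then
C(n,a)·C(n−a,b)·(1 − 3^{−3a})^{⌊(n−a−b)/3⌋} < 1. -/
theorem binomial_bad_event_bound :
    ∃ N : ℕ, ∀ n : ℕ, N ≤ n → ∀ a b : ℕ,
      1 ≤ a → (a : ℝ) < Real.log (Real.log n) → (b : ℝ) < (n : ℝ) / (Real.log n) ^ 5 →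
      (n.choose a : ℝ) * ((n - a).choose b : ℝ) *
        (1 - (1 / 3 : ℝ) ^ (3 * a)) ^ ((n - a - b) / 3) < 1 := by
  have hev : ∀ᶠ n : ℕ in Filter.atTop, (823543 : ℝ) ≤ Real.log n :=
    (Real.tendsto_log_atTop.comp tendsto_natCast_atTop_atTop).eventually_ge_atTop _
  obtain ⟨N, hN⟩ := Filter.eventually_atTop.mp hev
  refine ⟨max N 1, fun n hn a b ha1 ha hb => ?_⟩
  have hL : (823543 : ℝ) ≤ Real.log n := hN n (le_trans (le_max_left _ _) hn)
  set x : ℝ := (n : ℝ) with hxdef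
  set L : ℝ := Real.log x with hLdef
  set LL : ℝ := Real.log L with hLLdef
  have hn1 : 1 ≤ n := le_trans (le_max_right _ _) hn
  have hx1 : (1:ℝ) ≤ x := by rw [hxdef]; exact_mod_cast hn1
  have hx0 : (0:ℝ) < x := lt_of_lt_of_le one_pos hx1
  have hL0 : (0:ℝ) < L := by linarith
  have hexpL : Real.exp L = x := Real.exp_log hx0
  -- x is huge
  have hxbig : (823544:ℝ) ≤ x := by
    have := Real.add_one_le_exp L; rw [hexpL] at this; linarith
  -- L^6 ≤ x
  have hx6 : L ^ 6 ≤ x := by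
    have h7 : L / 7 ≤ Real.exp (L / 7) := by nlinarith [Real.add_one_le_exp (L/7)]
    have hpow : (L/7)^7 ≤ Real.exp (L/7) ^ 7 := pow_le_pow_left₀ (by positivity) h7 7
    have h2 : Real.exp (L/7) ^ 7 = x := by
      rw [← Real.exp_nat_mul]
      rw [show ((7:ℕ):ℝ) * (L/7) = L by push_cast; ring, hexpL]
    rw [h2] at hpow
    nlinarith [mul_le_mul_of_nonneg_right hL (pow_nonneg hL0.le 6)]
  -- log L ≥ 13
  have hLL13 : (13:ℝ) ≤ LL := by
    rw [hLLdef, Real.le_log_iff_exp_le hL0]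
    have h1 : Real.exp (13:ℝ) = Real.exp 1 ^ 13 := by
      rw [← Real.exp_nat_mul]; norm_num
    have h2 : Real.exp 1 ^ 13 ≤ (2.7182818286:ℝ) ^ 13 :=
      pow_le_pow_left₀ (Real.exp_pos 1).le Real.exp_one_lt_d9.le 13
    have h3 : (2.7182818286:ℝ) ^ 13 ≤ 823543 := by norm_num
    linarith [h1 ▸ (h2.trans h3)]
  have hLLpos : (0:ℝ) < LL := by linarith
  -- L ≤ x / L^5
  have hL5pos : (0:ℝ) < L^5 := by positivity
  have hLleX : L ≤ x / L^5 := by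
    rw [le_div_iff₀ hL5pos]; nlinarith
  have hLL_le : LL ≤ L - 1 := Real.log_le_sub_one_of_pos hL0
  have hab2 : (a:ℝ) + b < 2 * (x / L^5) := by
    have h1 : (a:ℝ) < x / L^5 := by linarith
    linarith
  have hL5_16 : (16:ℝ) ≤ L^5 := by
    have h25 : (2:ℝ)^5 ≤ L^5 := pow_le_pow_left₀ (by norm_num) (by linarith) 5
    linarith
  have habx8 : (a:ℝ) + b ≤ x/8 := by
    have h1 : x / L^5 ≤ x/16 := by gcongr <;> linarith
    linarith
  -- a + b < n
  have hab_lt_n : a + b < n := by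
    have : ((a+b:ℕ):ℝ) < (n:ℝ) := by push_cast; linarith
    exact_mod_cast this
  have han : a ≤ n := by omega
  have hbna : b ≤ n - a := by omega
  have hk : ((n - a - b : ℕ) : ℝ) = x - a - b := by
    rw [show n - a - b = (n-a) - b from rfl, Nat.cast_sub hbna, Nat.cast_sub han]
  -- m := (n-a-b)/3 ≥ x/4
  set m : ℕ := (n - a - b) / 3 with hmdef
  have hm : x/4 ≤ (m:ℝ) := by
    have hdm : 3 * m + (n-a-b) % 3 = n - a - b := Nat.div_add_mod _ 3
    have hmod : (n-a-b) % 3 < 3 := Nat.mod_lt _ (by norm_num)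
    have h1 : ((n-a-b:ℕ):ℝ) ≤ 3 * (m:ℝ) + 2 := by
      have := congrArg (fun t : ℕ => (t:ℝ)) hdm
      push_cast at this
      have h2 : (((n-a-b) % 3 : ℕ):ℝ) ≤ 2 := by exact_mod_cast Nat.le_of_lt_succ hmod
      linarith
    rw [hk] at h1
    linarith
  -- choose bounds
  have hC1 : (n.choose a : ℝ) ≤ x ^ a := by
    rw [hxdef]; exact_mod_cast Nat.choose_le_pow n a
  have hC2 : ((n - a).choose b : ℝ) ≤ x ^ b := by
    rw [hxdef]
    have h1 : (n-a).choose b ≤ (n-a) ^ b := Nat.choose_le_pow _ _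
    have h2 : (n-a)^b ≤ n^b := Nat.pow_le_pow_left (Nat.sub_le n a) b
    exact_mod_cast h1.trans h2
  -- t
  set t : ℝ := (1/3:ℝ)^(3*a) with htdef
  have ht_pos : (0:ℝ) < t := by positivity
  have ht_eq : t = ((27:ℝ)^a)⁻¹ := by
    rw [htdef, pow_mul, show ((1:ℝ)/3)^3 = (27:ℝ)⁻¹ by norm_num, inv_pow]
  have ht1 : t ≤ 1 := by
    rw [ht_eq]
    rw [inv_le_one_iff₀]
    right; exact one_le_pow₀ (by norm_num)
  -- exp-form of x^a
  have hxpow : ∀ c : ℕ, x ^ c = Real.exp ((c:ℝ) * L) := by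
    intro c
    rw [Real.exp_nat_mul, hexpL]
  -- (1-t)^m ≤ exp (-(t*m))
  have hq : (1 - t)^m ≤ Real.exp (-(t * m)) := by
    have h1 : (0:ℝ) ≤ 1 - t := by linarith
    have h2 : 1 - t ≤ Real.exp (-t) := by
      have := Real.add_one_le_exp (-t); linarith
    calc (1-t)^m ≤ (Real.exp (-t))^m := pow_le_pow_left₀ h1 h2 m
      _ = Real.exp ((m:ℝ) * (-t)) := (Real.exp_nat_mul _ m).symm
      _ = Real.exp (-(t * m)) := by ring_nf
  -- log 27 ≤ 83/25
  have hlog27 : Real.log 27 ≤ 83/25 := by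
    have he : (2.7182818283:ℝ) < Real.exp 1 := Real.exp_one_gt_d9
    have h1 : Real.log (3 / Real.exp 1) ≤ 3 / Real.exp 1 - 1 :=
      Real.log_le_sub_one_of_pos (by positivity)
    rw [Real.log_div (by norm_num) (Real.exp_ne_zero 1), Real.log_exp] at h1
    have h2 : 3 / Real.exp 1 ≤ 3 / (2.7182818283:ℝ) := by gcongr <;> norm_num
    have h3 : (3:ℝ) / (2.7182818283:ℝ) ≤ 83/75 := by norm_num
    have hlog3 : Real.log 3 ≤ 83/75 := by linarith
    have h27 : Real.log 27 = 3 * Real.log 3 := by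
      rw [show (27:ℝ) = 3^3 by norm_num, Real.log_pow]; norm_num
    rw [h27]; linarith
  -- 27^a ≤ E1
  set E1 : ℝ := Real.exp ((83/25) * LL) with hE1def
  set E2 : ℝ := Real.exp ((17/25) * LL) with hE2def
  have hE1pos : (0:ℝ) < E1 := Real.exp_pos _
  have hE2pos : (0:ℝ) < E2 := Real.exp_pos _
  have h27E1 : (27:ℝ)^a ≤ E1 := by
    have h1 : (27:ℝ)^a = Real.exp ((a:ℝ) * Real.log 27) := by
      rw [Real.exp_nat_mul, Real.exp_log (by norm_num : (0:ℝ) < 27)]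
    rw [h1, hE1def]
    apply Real.exp_le_exp.mpr
    have hlog27nn : (0:ℝ) ≤ Real.log 27 := Real.log_nonneg (by norm_num)
    have := mul_le_mul ha.le hlog27 hlog27nn hLLpos.le
    linarith
  have hE2gt8 : (8:ℝ) < E2 := by
    have := Real.add_one_le_exp ((17/25) * LL)
    rw [hE2def]; linarith
  have hL4eq : L^4 = E1 * E2 := by
    have h1 : L^4 = Real.exp ((4:ℝ) * LL) := by
      rw [show (4:ℝ) * LL = ((4:ℕ):ℝ) * LL by norm_num, Real.exp_nat_mul,
        hLLdef, Real.exp_log hL0]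
    rw [h1, hE1def, hE2def, ← Real.exp_add]
    ring_nf
  have hL4pos : (0:ℝ) < L^4 := by positivity
  have h27pos : (0:ℝ) < (27:ℝ)^a := by positivity
  -- key inequality
  have hkey : (a:ℝ) * L + (b:ℝ) * L < t * m := by
    have hstep : ((a:ℝ) + b) * L * (27:ℝ)^a < x/4 := by
      have c1 : ((a:ℝ) + b) * L * (27:ℝ)^a ≤ (2 * (x / L^5)) * L * (27:ℝ)^a := by
        have habnn : (0:ℝ) ≤ (a:ℝ) + b := by positivity
        gcongr
      have c2 : (2 * (x / L^5)) * L * (27:ℝ)^a = 2 * x * (27:ℝ)^a / L^4 := by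
        field_simp
      have c3 : 2 * x * (27:ℝ)^a / L^4 ≤ 2 * x * E1 / (E1 * E2) := by
        rw [← hL4eq]; gcongr
      have c4 : 2 * x * E1 / (E1 * E2) = 2 * x / E2 := by
        field_simp
      have c5 : 2 * x / E2 < x/4 := by
        rw [div_lt_div_iff₀ hE2pos (by norm_num : (0:ℝ) < 4)]
        have h8 : x * 8 < x * E2 := mul_lt_mul_of_pos_left hE2gt8 hx0
        linarith
      calc ((a:ℝ) + b) * L * (27:ℝ)^a ≤ (2 * (x / L^5)) * L * (27:ℝ)^a := c1
        _ = 2 * x * (27:ℝ)^a / L^4 := c2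
        _ ≤ 2 * x * E1 / (E1 * E2) := c3
        _ = 2 * x / E2 := c4
        _ < x/4 := c5
    have hta : t * m = (m:ℝ) / (27:ℝ)^a := by
      rw [ht_eq]; ring
    rw [hta]
    have h1 : ((a:ℝ) + b) * L < (x/4) / (27:ℝ)^a := by
      rw [lt_div_iff₀ h27pos]; exact hstep
    have h2 : (x/4) / (27:ℝ)^a ≤ (m:ℝ) / (27:ℝ)^a := by gcongr
    linarith [h1.trans_le h2]
  -- assemble
  have hP : (n.choose a : ℝ) * ((n - a).choose b : ℝ) * (1 - t) ^ m ≤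
      Real.exp ((a:ℝ) * L) * Real.exp ((b:ℝ) * L) * Real.exp (-(t * m)) := by
    have hC1' : (n.choose a : ℝ) ≤ Real.exp ((a:ℝ) * L) := by rw [← hxpow]; exact hC1
    have hC2' : ((n - a).choose b : ℝ) ≤ Real.exp ((b:ℝ) * L) := by rw [← hxpow]; exact hC2
    have h1 : (0:ℝ) ≤ 1 - t := by linarith
    exact mul_le_mul (mul_le_mul hC1' hC2' (Nat.cast_nonneg _) (Real.exp_pos _).le)
      hq (pow_nonneg h1 m) (by positivity)
  have hfin : Real.exp ((a:ℝ) * L) * Real.exp ((b:ℝ) * L) * Real.exp (-(t * m)) < 1 := by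
    rw [← Real.exp_add, ← Real.exp_add, Real.exp_lt_one_iff]
    linarith
  exact lt_of_le_of_lt hP hfin
end

section
/- Let H be a graph on n ≥ 6 vertices with a spanning tree T whose domination number satisfies τ(T) ≥ 3. Fix distinct vertices x, y of K_n and a 3-edge-coloring in which: every edge incident to x is red or green (no blue at x), every edge incident to y is red or blue (no green at y), xy is red, and every edge not incident to x or y is blue or green (not red). Then K_n contains no monochromatic copy of H. -/
/-- Colors: 0 = red, 1 = blue, 2 = green. If H on n ≥ 6 vertices has a spanning tree T
with τ(T) ≥ 3, and a 3-edge-coloring of Kₙ satisfies: no blue edge at x, no green edge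
at y, xy is red, and no red edge avoiding {x,y}, then there is no monochromatic copy of H. -/
theorem builder_coloring_no_monochromatic_copy (n : ℕ) (hn : 6 ≤ n)
    (H T : SimpleGraph (Fin n)) (hTH : T ≤ H) (hT : T.IsTree) (hdom : 3 ≤ domNum T)
    (x y : Fin n) (hxy : x ≠ y)
    (c : Fin n → Fin n → Fin 3) (hsym : ∀ i j, c i j = c j i)
    (hx : ∀ u : Fin n, u ≠ x → c x u ≠ 1)
    (hy : ∀ u : Fin n, u ≠ y → c y u ≠ 2)
    (hxyred : c x y = 0)
    (hrest : ∀ u v : Fin n, u ≠ v → u ≠ x → u ≠ y → v ≠ x → v ≠ y → c u v ≠ 0) :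
    ¬ ∃ (φ : Fin n → Fin n) (col : Fin 3), Function.Injective φ ∧
        ∀ u v : Fin n, H.Adj u v → c (φ u) (φ v) = col := by
  rintro ⟨φ, col, hinj, hcol⟩
  have hsurj : Function.Surjective φ := (Finite.injective_iff_bijective.mp hinj).surjective
  have hnbr : ∀ v : Fin n, ∃ w, T.Adj v w := by
    intro v
    have hcard : 1 < Fintype.card (Fin n) := by simp; omega
    obtain ⟨u, hu⟩ := Fintype.exists_ne_of_one_lt_card hcard v
    obtain ⟨p⟩ := hT.isConnected.preconnected v u
    cases p with
    | nil => exact absurd rfl hu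
    | cons h p => exact ⟨_, h⟩
  fin_cases col
  · -- red
    obtain ⟨a, ha⟩ := hsurj x
    obtain ⟨b, hb⟩ := hsurj y
    have hab : a ≠ b := by intro h; apply hxy; rw [← ha, ← hb, h]
    have hdomset : IsDomSet T {a, b} := by
      intro v
      by_cases hva : v = a
      · left; simp [hva]
      by_cases hvb : v = b
      · left; simp [hvb]
      right
      obtain ⟨w, hw⟩ := hnbr v
      have hedge := hcol v w (hTH hw)
      have hvw : v ≠ w := T.ne_of_adj hw
      have h1 : φ v ≠ φ w := fun h => hvw (hinj h)
      have h2 : φ v ≠ x := fun h => hva (hinj (h.trans ha.symm))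
      have h3 : φ v ≠ y := fun h => hvb (hinj (h.trans hb.symm))
      by_cases h4 : φ w = x
      · have : w = a := hinj (h4.trans ha.symm)
        exact ⟨w, by simp [this], hw.symm⟩
      by_cases h5 : φ w = y
      · have : w = b := hinj (h5.trans hb.symm)
        exact ⟨w, by simp [this], hw.symm⟩
      exact absurd hedge (hrest _ _ h1 h2 h3 h4 h5)
    have hmem : 2 ∈ {k | ∃ S : Finset (Fin n), S.card = k ∧ IsDomSet T S} :=
      ⟨{a, b}, Finset.card_pair hab, hdomset⟩
    have := Nat.sInf_le hmem
    unfold domNum at hdom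
    omega
  · -- blue
    obtain ⟨a, ha⟩ := hsurj x
    obtain ⟨w, hw⟩ := hnbr a
    have hedge := hcol a w (hTH hw)
    rw [ha] at hedge
    exact hx (φ w) (fun h => (T.ne_of_adj hw) (hinj (h.trans ha.symm)).symm) hedge
  · -- green
    obtain ⟨a, ha⟩ := hsurj y
    obtain ⟨w, hw⟩ := hnbr a
    have hedge := hcol a w (hTH hw)
    rw [ha] at hedge
    exact hy (φ w) (fun h => (T.ne_of_adj hw) (hinj (h.trans ha.symm)).symm) hedge
end

section
/- For t ≥ 5 and n = ⌊(3/2)^{t/2}⌋ (so n^t · (2/3)^{C(t,2)} · 3 · e^t · t^{−t} style bound applies), there exists a 3-edge-coloring of K_n such that every set of t vertices induces edges of all three colors; consequently ξ(K_t) ≥ (√(3/2))^t. (Probabilistic proof: a uniformly random 3-coloring avoids any t-set missing a color with positive probability, since C(n,t)·3·(2/3)^{C(t,2)} < 1.) -/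
/-!
Color the edges of `K_n` uniformly at random with `k` colors. A fixed `t`-set misses a fixed
color with probability `((k - 1) / k) ^ C(t, 2)`, so by the union bound some coloring shows every
color on every `t`-set as soon as `k · C(n, t) · ((k - 1) / k) ^ C(t, 2) < 1`, i.e.
`k · C(n, t) · (k - 1) ^ C(t, 2) < k ^ C(t, 2)`. For `k = 3` and
`n ≤ (√(3/2))^t`, `C(n, t) ≤ n^t / t!` and `n^t ≤ (√(3/2))^(t²) = (3/2)^C(t,2) · (√(3/2))^t`
reduce the condition to `3 · (√(3/2))^t < t!`, which holds from `t = 5` on.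
-/

open Finset
open scoped Nat

lemma exists_forall_notMem_of_sum_card_lt {ι α : Type*} [Fintype α] [DecidableEq α]
    {I : Finset ι} (B : ι → Finset α) (h : ∑ i ∈ I, #(B i) < Fintype.card α) :
    ∃ a, ∀ i ∈ I, a ∉ B i := by
  by_contra! hcover
  have hsub : (univ : Finset α) ⊆ I.biUnion B := fun a _ => by simpa using hcover a
  exact ((card_le_card hsub).trans card_biUnion_le).not_gt (by simpa using h)

lemma card_filter_forall_ne {α β : Type*} [Fintype α] [DecidableEq α] [Fintype β]
    [DecidableEq β] (s : Finset α) (b : β) :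
    #{f : α → β | ∀ a ∈ s, f a ≠ b} = (Fintype.card β - 1) ^ #s * Fintype.card β ^ #sᶜ := by
  have hpi : ({f : α → β | ∀ a ∈ s, f a ≠ b} : Finset (α → β)) =
      Fintype.piFinset fun a => if a ∈ s then ({b}ᶜ : Finset β) else univ := by
    ext f
    simp only [mem_filter, mem_univ, true_and, Fintype.mem_piFinset]
    refine forall_congr' fun a => ?_
    split_ifs with ha <;> simp [ha]
  simp only [hpi, Fintype.card_piFinset, apply_ite card]
  rw [prod_ite, filter_notMem_eq_sdiff, ← compl_eq_univ_sdiff]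
  simp [card_compl]

theorem exists_sym2_coloring_forall_colors {V β : Type*} [Fintype V] [DecidableEq V]
    [Fintype β] [DecidableEq β] [Nonempty β] {t : ℕ}
    (h : Fintype.card β * (Fintype.card V).choose t * (Fintype.card β - 1) ^ t.choose 2 <
      Fintype.card β ^ t.choose 2) :
    ∃ f : Sym2 V → β, ∀ S : Finset V, #S = t → ∀ b : β,
      ∃ u ∈ S, ∃ v ∈ S, u ≠ v ∧ f s(u, v) = b := by
  set k := Fintype.card β
  let edges (S : Finset V) : Finset (Sym2 V) := S.offDiag.image Sym2.mk.uncurry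
  let bad (p : Finset V × β) : Finset (Sym2 V → β) := {f | ∀ e ∈ edges p.1, f e ≠ p.2}
  -- Multiplied by `k ^ C(t, 2)` to avoid the truncated exponent `card (Sym2 V) - C(t, 2)`.
  have hbad : ∀ p ∈ powersetCard t univ ×ˢ univ,
      #(bad p) * k ^ t.choose 2 = (k - 1) ^ t.choose 2 * k ^ Fintype.card (Sym2 V) := by
    intro p hp
    have hcard : #(edges p.1) = t.choose 2 := by
      rw [Sym2.card_image_offDiag, (mem_powersetCard_univ.mp (mem_product.mp hp).1)]
    rw [card_filter_forall_ne, hcard, mul_assoc, ← pow_add, ← hcard, card_compl_add_card]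
  have hsum : ∑ p ∈ powersetCard t univ ×ˢ univ, #(bad p) < Fintype.card (Sym2 V → β) := by
    refine Nat.lt_of_mul_lt_mul_right (a := k ^ t.choose 2) ?_
    rw [sum_mul, sum_congr rfl hbad, sum_const, card_product, card_powersetCard, card_univ,
      card_univ, Fintype.card_fun, smul_eq_mul]
    have hk : 0 < k ^ Fintype.card (Sym2 V) := pow_pos Fintype.card_pos _
    convert Nat.mul_lt_mul_of_pos_right h hk using 1
    · ring
    · exact mul_comm _ _
  obtain ⟨f, hf⟩ := exists_forall_notMem_of_sum_card_lt bad hsum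
  refine ⟨f, fun S hS b => ?_⟩
  have hgood := hf (S, b) (mem_product.mpr ⟨mem_powersetCard_univ.mpr hS, mem_univ b⟩)
  simp only [bad, edges, mem_filter, mem_univ, true_and, not_forall, not_not, mem_image,
    mem_offDiag] at hgood
  obtain ⟨_, ⟨⟨u, v⟩, ⟨hu, hv, huv⟩, rfl⟩, hb⟩ := hgood
  exact ⟨u, hu, v, hv, huv, hb⟩

lemma three_mul_sqrt_three_halves_pow_lt_factorial {t : ℕ} (ht : 5 ≤ t) :
    3 * √(3 / 2) ^ t < t ! := by
  have hs : √(3 / 2) ≤ 2 := Real.sqrt_le_iff.mpr ⟨by norm_num, by norm_num⟩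
  induction t, ht using Nat.le_induction with
  | base =>
    calc (3 : ℝ) * √(3 / 2) ^ 5 ≤ 3 * 2 ^ 5 := by gcongr
      _ < ((5 ! : ℕ) : ℝ) := by norm_num [Nat.factorial]
  | succ k hk ih =>
    calc 3 * √(3 / 2) ^ (k + 1) = √(3 / 2) * (3 * √(3 / 2) ^ k) := by ring
      _ < (k + 1) * k ! := by
        gcongr
        have : (5 : ℝ) ≤ k := by exact_mod_cast hk
        linarith
      _ = (k + 1)! := by push_cast [Nat.factorial_succ]; ring

lemma three_mul_choose_mul_two_pow_lt {n t : ℕ} (ht : 5 ≤ t) (hn : (n : ℝ) ≤ √(3 / 2) ^ t) :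
    3 * n.choose t * 2 ^ t.choose 2 < 3 ^ t.choose 2 := by
  set m := t.choose 2
  have hsq : t * t = 2 * m + t := by
    have h : ((t * t : ℕ) : ℝ) = ((2 * m + t : ℕ) : ℝ) := by
      push_cast [m, Nat.cast_choose_two]; ring
    exact_mod_cast h
  have hpow : (n : ℝ) ^ t ≤ (3 / 2) ^ m * √(3 / 2) ^ t := by
    calc (n : ℝ) ^ t ≤ (√(3 / 2) ^ t) ^ t := by gcongr
      _ = (√(3 / 2) ^ 2) ^ m * √(3 / 2) ^ t := by rw [← pow_mul, hsq, pow_add, pow_mul]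
      _ = (3 / 2) ^ m * √(3 / 2) ^ t := by rw [Real.sq_sqrt (by norm_num)]
  have hfact := three_mul_sqrt_three_halves_pow_lt_factorial ht
  have hpos : (0 : ℝ) < t ! := by positivity
  suffices (3 * n.choose t * 2 ^ m : ℝ) < 3 ^ m by exact_mod_cast this
  calc (3 * n.choose t * 2 ^ m : ℝ) ≤ 3 * (n ^ t / t !) * 2 ^ m := by
        gcongr; exact Nat.choose_le_pow_div t n
    _ ≤ 3 * ((3 / 2) ^ m * √(3 / 2) ^ t / t !) * 2 ^ m := by gcongr
    _ = 3 ^ m * (3 * √(3 / 2) ^ t / t !) := by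
        rw [div_pow]; field_simp
    _ < 3 ^ m := mul_lt_of_lt_one_right (by positivity) ((div_lt_one hpos).mpr hfact)

/-- Probabilistic lower bound for cliques: for t ≥ 5 and n = ⌊(√(3/2))^t⌋ there is a
3-edge-coloring of Kₙ in which every set of t vertices induces edges of all three
colors; hence ξ(K_t) ≥ (√(3/2))^t. -/
theorem xi_clique_lower (t : ℕ) (ht : 5 ≤ t) :
    ∃ c : Fin ⌊(Real.sqrt (3 / 2)) ^ t⌋₊ → Fin ⌊(Real.sqrt (3 / 2)) ^ t⌋₊ → Fin 3,
      (∀ i j, c i j = c j i) ∧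
      ∀ S : Finset (Fin ⌊(Real.sqrt (3 / 2)) ^ t⌋₊), S.card = t →
        ∀ col : Fin 3, ∃ u ∈ S, ∃ v ∈ S, u ≠ v ∧ c u v = col := by
  have hcount := three_mul_choose_mul_two_pow_lt ht (Nat.floor_le (by positivity))
  obtain ⟨f, hf⟩ := exists_sym2_coloring_forall_colors (V := Fin ⌊√(3 / 2) ^ t⌋₊) (β := Fin 3)
    (t := t) (by simpa using hcount)
  exact ⟨fun u v => f s(u, v), fun u v => congrArg f Sym2.eq_swap, hf⟩
end
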